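/- Let G be a finite non-abelian p-group of coclass 2 (i.e., |G| = p^n and the nilpotency class of G is n − 2) for which |G/Z(G)| = |G'|^{d(G/Z(G))}, where d(G/Z(G)) is the minimal number of generators of G/Z(G). Then |G| = p^4 or |G| = p^5. -/

import Mathlib

/-!
Since `G` is non-abelian, its class `c = n - 2` is at least `2`, and `G/Z(G)` is not cyclic,
so `d(G/Z(G)) ≥ 2`. The lower central series of a nilpotent group descends strictly down to
`γ_c = 1`, so in a `p`-group `|G'| = |γ_1| ≥ p ^ (c - 1) = p ^ (n - 3)`. Hence
`|G/Z(G)| = |G'| ^ d ≥ p ^ (2n - 6)`, while `|G/Z(G)| ≤ p ^ (n - 1)` because the center of a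
nontrivial `p`-group is nontrivial. Thus `2n - 6 ≤ n - 1`, i.e. `n ≤ 5`, and `n ≥ 4` from `c ≥ 2`.
-/

section

variable {G : Type*} [Group G]

lemma Subgroup.lowerCentralSeries_add_eq_of_succ_eq {S : Subgroup G} {i : ℕ}
    (h : S.lowerCentralSeries (i + 1) = S.lowerCentralSeries i) :
    ∀ j, S.lowerCentralSeries (i + j) = S.lowerCentralSeries i
  | 0 => rfl
  | j + 1 => by
    rw [← add_assoc, lowerCentralSeries_succ, lowerCentralSeries_add_eq_of_succ_eq h j,
      ← lowerCentralSeries_succ, h]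

lemma Subgroup.top_lowerCentralSeries_succ_lt [Group.IsNilpotent G] {i : ℕ}
    (hi : i < Group.nilpotencyClass G) :
    (⊤ : Subgroup G).lowerCentralSeries (i + 1) < (⊤ : Subgroup G).lowerCentralSeries i := by
  refine lt_of_le_of_ne (lowerCentralSeries_antitone _ (Nat.le_succ i)) fun h ↦ hi.not_ge ?_
  rw [← lowerCentralSeries_eq_bot_iff_nilpotencyClass_le,
    ← lowerCentralSeries_add_eq_of_succ_eq h (Group.nilpotencyClass G)]
  exact lowerCentralSeries_eq_bot_iff_nilpotencyClass_le.mpr (Nat.le_add_left _ _)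

lemma Group.two_le_nilpotencyClass [Group.IsNilpotent G] (hG : ¬IsMulCommutative G) :
    2 ≤ Group.nilpotencyClass G := by
  by_contra! h
  exact hG (Group.IsNilpotent.nilpotencyClass_le_one_iff.mp (Nat.le_of_lt_succ h))

lemma Group.isCyclic_of_rank_le_one [Group.FG G] (h : Group.rank G ≤ 1) : IsCyclic G := by
  obtain ⟨S, hScard, hS⟩ := Group.rank_spec G
  obtain ⟨g, hg⟩ := Finset.card_le_one_iff_subset_singleton.mp (hScard ▸ h)
  refine isCyclic_iff_exists_zpowers_eq_top.mpr ⟨g, top_le_iff.mp ?_⟩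
  rw [← hS, Subgroup.zpowers_eq_closure]
  exact Subgroup.closure_mono (by exact_mod_cast hg)

lemma Group.two_le_rank_quotient_center [Finite G] (hG : ¬IsMulCommutative G) :
    2 ≤ Group.rank (G ⧸ Subgroup.center G) := by
  by_contra! h
  have := Group.isCyclic_of_rank_le_one (G := G ⧸ Subgroup.center G) (Nat.le_of_lt_succ h)
  exact hG (isMulCommutative_of_isCyclic_quotient_center_self G)

namespace IsPGroup

variable {p : ℕ} [Fact p.Prime] [Finite G]

open Subgroup in
lemma mul_card_dvd_card_of_lt (hG : IsPGroup p G) {H K : Subgroup G} (hHK : H < K) :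
    p * Nat.card H ∣ Nat.card K := by
  obtain ⟨k, hk⟩ := (hG.to_subgroup K).index (H.subgroupOf K)
  have hk0 : k ≠ 0 := by
    rintro rfl
    exact hHK.not_ge (relIndex_eq_one.mp hk)
  rw [← (H.subgroupOf K).card_mul_index, Nat.card_congr (subgroupOfEquivOfLe hHK.le).toEquiv,
    hk, mul_comm p]
  exact mul_dvd_mul_left _ (dvd_pow_self p hk0)

lemma pow_dvd_card_lowerCentralSeries (hG : IsPGroup p G) [Group.IsNilpotent G] {i : ℕ}
    (hi : i ≤ Group.nilpotencyClass G) :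
    p ^ (Group.nilpotencyClass G - i) ∣ Nat.card ((⊤ : Subgroup G).lowerCentralSeries i) := by
  induction hi using Nat.decreasingInduction with
  | self => simp
  | of_succ i hi ih =>
    rw [show Group.nilpotencyClass G - i = Group.nilpotencyClass G - (i + 1) + 1 by omega,
      pow_succ']
    exact (mul_dvd_mul_left p ih).trans
      (hG.mul_card_dvd_card_of_lt (Subgroup.top_lowerCentralSeries_succ_lt hi))

end IsPGroup

end

theorem card_eq_of_coclass_two (p : ℕ) (hp : p.Prime) (G : Type*) [Group G] [Finite G]
    [Group.IsNilpotent G] (n : ℕ) (hcard : Nat.card G = p ^ n)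
    (hclass : Group.nilpotencyClass G = n - 2)
    (hnab : ∃ a b : G, a * b ≠ b * a)
    (heq : Nat.card (G ⧸ Subgroup.center G) =
      Nat.card (commutator G) ^ Group.rank (G ⧸ Subgroup.center G)) :
    Nat.card G = p ^ 4 ∨ Nat.card G = p ^ 5 := by
  have := Fact.mk hp
  have hG : IsPGroup p G := IsPGroup.of_card hcard
  obtain ⟨a, b, hab⟩ := hnab
  have hnc : ¬IsMulCommutative G := fun h ↦ hab (h.is_comm.comm a b)
  have hc := Group.two_le_nilpotencyClass hnc
  have hcomm : p ^ (n - 3) ∣ Nat.card (commutator G) := by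
    have := hG.pow_dvd_card_lowerCentralSeries (i := 1) (by omega)
    rwa [Subgroup.top_lowerCentralSeries_one, hclass, show n - 2 - 1 = n - 3 by omega] at this
  obtain ⟨z, hz, hZ⟩ := IsPGroup.card_center_eq_prime_pow hcard (by omega)
  have hdvd : p ^ (2 * (n - 3) + 1) ∣ p ^ n :=
    calc p ^ (2 * (n - 3) + 1) = (p ^ (n - 3)) ^ 2 * p := by ring
      _ ∣ Nat.card (commutator G) ^ Group.rank (G ⧸ Subgroup.center G) *
          Nat.card (Subgroup.center G) :=
        mul_dvd_mul ((pow_dvd_pow_of_dvd hcomm 2).trans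
          (pow_dvd_pow _ (Group.two_le_rank_quotient_center hnc))) (hZ ▸ dvd_pow_self p hz.ne')
      _ = p ^ n := by rw [← heq, ← Subgroup.card_eq_card_quotient_mul_card_subgroup, hcard]
  have hn := (Nat.pow_dvd_pow_iff_le_right hp.one_lt).mp hdvd
  obtain rfl | rfl : n = 4 ∨ n = 5 := by omega
  exacts [.inl hcard, .inr hcard]
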